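/- arXiv:2406.10620 — 9 statements merged into one kernel-verified Lean document; each statement's English description precedes it below -/
import Mathlib

section
/- Let V be a finite-dimensional real inner product space and let A_1, A_2, B_1, B_2 be symmetric linear endomorphisms of V such that G_{A_1} + G_{A_2} = G_{B_1} + G_{B_2} as quadrilinear forms and A_1² + A_2² = B_1² + B_2² (equality of third fundamental forms). Then (tr A_1)·A_1 + (tr A_2)·A_2 = (tr B_1)·B_1 + (tr B_2)·B_2 as endomorphisms, and (tr A_1)² + (tr A_2)² = (tr B_1)² + (tr B_2)² (equality of the squared norms of the mean curvature vectors). -/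
open scoped RealInnerProductSpace

/-- The Gauss tensor of an endomorphism `A` of a real inner product space:
`G_A(X,Y,Z,W) = ⟪AX,W⟫⟪AY,Z⟫ − ⟪AX,Z⟫⟪AY,W⟫`. -/
noncomputable def gaussTensor {V : Type*} [NormedAddCommGroup V]
    [InnerProductSpace ℝ V] (A : V →ₗ[ℝ] V) (X Y Z W : V) : ℝ :=
  ⟪A X, W⟫ * ⟪A Y, Z⟫ - ⟪A X, Z⟫ * ⟪A Y, W⟫

lemma trace_eq_sum_inner' {V : Type*} [NormedAddCommGroup V] [InnerProductSpace ℝ V]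
    [FiniteDimensional ℝ V] {ι : Type*} [Fintype ι] [DecidableEq ι]
    (b : OrthonormalBasis ι ℝ V) (A : V →ₗ[ℝ] V) :
    LinearMap.trace ℝ V A = ∑ i, ⟪b i, A (b i)⟫ := by
  rw [LinearMap.trace_eq_matrix_trace ℝ b.toBasis A, Matrix.trace]
  congr 1
  ext i
  rw [Matrix.diag_apply, LinearMap.toMatrix_apply, b.coe_toBasis_repr_apply, b.repr_apply_apply,
    b.coe_toBasis]

lemma contract_gauss {V : Type*} [NormedAddCommGroup V] [InnerProductSpace ℝ V]
    [FiniteDimensional ℝ V] {ι : Type*} [Fintype ι] [DecidableEq ι]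
    (b : OrthonormalBasis ι ℝ V) (A : V →ₗ[ℝ] V)
    (hA : ∀ X Y : V, ⟪A X, Y⟫ = ⟪X, A Y⟫) (X W : V) :
    ∑ i, gaussTensor A X (b i) (b i) W
      = ⟪A X, W⟫ * LinearMap.trace ℝ V A - ⟪A (A X), W⟫ := by
  rw [trace_eq_sum_inner' b A]
  simp only [gaussTensor, Finset.sum_sub_distrib, Finset.mul_sum]
  congr 1
  · exact Finset.sum_congr rfl fun i _ => real_inner_comm (A (b i)) (b i) ▸ rfl
  · have : ∑ i, ⟪A X, b i⟫ * ⟪A (b i), W⟫ = ∑ i, ⟪A X, b i⟫ * ⟪b i, A W⟫ := by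
      refine Finset.sum_congr rfl fun i _ => by rw [hA (b i) W]
    rw [this, b.sum_inner_mul_inner, ← hA]

/-- Equality of Gauss tensors together with equality of third fundamental forms
forces equality of the mean-curvature contractions and of the squared norms of
the mean curvature vectors. -/
theorem mean_curvature_contractions_eq
    {V : Type*} [NormedAddCommGroup V] [InnerProductSpace ℝ V]
    [FiniteDimensional ℝ V]
    (A₁ A₂ B₁ B₂ : V →ₗ[ℝ] V)
    (hA₁ : ∀ X Y : V, ⟪A₁ X, Y⟫ = ⟪X, A₁ Y⟫)
    (hA₂ : ∀ X Y : V, ⟪A₂ X, Y⟫ = ⟪X, A₂ Y⟫)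
    (hB₁ : ∀ X Y : V, ⟪B₁ X, Y⟫ = ⟪X, B₁ Y⟫)
    (hB₂ : ∀ X Y : V, ⟪B₂ X, Y⟫ = ⟪X, B₂ Y⟫)
    (hGauss : ∀ X Y Z W : V,
      gaussTensor A₁ X Y Z W + gaussTensor A₂ X Y Z W =
        gaussTensor B₁ X Y Z W + gaussTensor B₂ X Y Z W)
    (hIII : A₁ ∘ₗ A₁ + A₂ ∘ₗ A₂ = B₁ ∘ₗ B₁ + B₂ ∘ₗ B₂) :
    (LinearMap.trace ℝ V A₁) • A₁ + (LinearMap.trace ℝ V A₂) • A₂ =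
        (LinearMap.trace ℝ V B₁) • B₁ + (LinearMap.trace ℝ V B₂) • B₂ ∧
      (LinearMap.trace ℝ V A₁) ^ 2 + (LinearMap.trace ℝ V A₂) ^ 2 =
        (LinearMap.trace ℝ V B₁) ^ 2 + (LinearMap.trace ℝ V B₂) ^ 2 := by
  classical
  obtain ⟨ι, ⟨b⟩⟩ := exists_orthonormalBasis ℝ V
  have key : (LinearMap.trace ℝ V A₁) • A₁ + (LinearMap.trace ℝ V A₂) • A₂ =
      (LinearMap.trace ℝ V B₁) • B₁ + (LinearMap.trace ℝ V B₂) • B₂ := by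
    ext X
    apply ext_inner_right ℝ
    intro W
    have h := congrArg (fun f => ∑ i, f (b i)) (funext fun Y => hGauss X Y (Y) W)
    have hsum : ∑ i, (gaussTensor A₁ X (b i) (b i) W + gaussTensor A₂ X (b i) (b i) W)
        = ∑ i, (gaussTensor B₁ X (b i) (b i) W + gaussTensor B₂ X (b i) (b i) W) :=
      Finset.sum_congr rfl fun i _ => hGauss X (b i) (b i) W
    rw [Finset.sum_add_distrib, Finset.sum_add_distrib,
      contract_gauss b A₁ hA₁, contract_gauss b A₂ hA₂,
      contract_gauss b B₁ hB₁, contract_gauss b B₂ hB₂] at hsum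
    have hIII' : ⟪A₁ (A₁ X), W⟫ + ⟪A₂ (A₂ X), W⟫ = ⟪B₁ (B₁ X), W⟫ + ⟪B₂ (B₂ X), W⟫ := by
      have := congrArg (fun f : V →ₗ[ℝ] V => ⟪f X, W⟫) hIII
      simpa [inner_add_left] using this
    simp only [LinearMap.add_apply, LinearMap.smul_apply, inner_add_left, inner_smul_left,
      RCLike.ofReal_real_eq_id, id_eq, conj_trivial]
    linarith [hsum, hIII']
  refine ⟨key, ?_⟩
  have := congrArg (LinearMap.trace ℝ V) key
  simpa [map_add, map_smul, sq, smul_eq_mul] using this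
end

section
/- Let V be a finite-dimensional real inner product space and let A_1, A_2, B_1, B_2 be symmetric linear endomorphisms of V with G_{A_1} + G_{A_2} = G_{B_1} + G_{B_2} as quadrilinear forms and A_1² + A_2² = B_1² + B_2². Set μ = √((tr A_1)² + (tr A_2)²) and assume μ ≠ 0. Define A_ξ = ((tr A_1)·A_2 − (tr A_2)·A_1)/μ and B_ξ̄ = ((tr B_1)·B_2 − (tr B_2)·B_1)/μ. Then G_{A_ξ} = G_{B_ξ̄}; equivalently, the symmetric bilinear map β : V × V → ℝ², β(X,Y) = (⟨A_ξ X, Y⟩, ⟨B_ξ̄ X, Y⟩), is flat with respect to the Lorentzian inner product ⟨⟨(a,b),(c,d)⟩⟩ = ac − bd. -/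
open scoped RealInnerProductSpace

private lemma key_alg (m t1 t2 s1 s2 p1 p2 q1 q2 r1 r2 u1 u2 c1 c2 d1 d2 e1 e2 f1 f2 : ℝ)
    (hm : t1 ^ 2 + t2 ^ 2 = m) (hs : s1 ^ 2 + s2 ^ 2 = m)
    (hG : p1 * r1 - c1 * e1 + (p2 * r2 - c2 * e2)
        = q1 * u1 - d1 * f1 + (q2 * u2 - d2 * f2))
    (hXW : t1 * p1 + t2 * p2 = s1 * q1 + s2 * q2)
    (hYZ : t1 * r1 + t2 * r2 = s1 * u1 + s2 * u2)
    (hXZ : t1 * c1 + t2 * c2 = s1 * d1 + s2 * d2)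
    (hYW : t1 * e1 + t2 * e2 = s1 * f1 + s2 * f2) :
    (t1 * p2 - t2 * p1) * (t1 * r2 - t2 * r1)
      - (t1 * c2 - t2 * c1) * (t1 * e2 - t2 * e1)
    = (s1 * q2 - s2 * q1) * (s1 * u2 - s2 * u1)
      - (s1 * d2 - s2 * d1) * (s1 * f2 - s2 * f1) := by
  linear_combination (t1 ^ 2 + t2 ^ 2) * hG
    + (q1 * u1 + q2 * u2 - d1 * f1 - d2 * f2) * hm
    - (q1 * u1 + q2 * u2 - d1 * f1 - d2 * f2) * hs
    - (t1 * r1 + t2 * r2) * hXW - (s1 * q1 + s2 * q2) * hYZ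
    + (t1 * e1 + t2 * e2) * hXZ + (s1 * d1 + s2 * d2) * hYW

/-- The trace-free parts of the shape operators have equal Gauss tensors;
equivalently the pair `β = (⟪A_ξ ·,·⟫, ⟪B_ξ̄ ·,·⟫)` is flat for the Lorentzian
inner product `⟨⟨(a,b),(c,d)⟩⟩ = ac − bd`. -/
theorem trace_free_parts_flat
    {V : Type*} [NormedAddCommGroup V] [InnerProductSpace ℝ V]
    [FiniteDimensional ℝ V]
    (A₁ A₂ B₁ B₂ : V →ₗ[ℝ] V)
    (hA₁ : ∀ X Y : V, ⟪A₁ X, Y⟫ = ⟪X, A₁ Y⟫)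
    (hA₂ : ∀ X Y : V, ⟪A₂ X, Y⟫ = ⟪X, A₂ Y⟫)
    (hB₁ : ∀ X Y : V, ⟪B₁ X, Y⟫ = ⟪X, B₁ Y⟫)
    (hB₂ : ∀ X Y : V, ⟪B₂ X, Y⟫ = ⟪X, B₂ Y⟫)
    (hGauss : ∀ X Y Z W : V,
      gaussTensor A₁ X Y Z W + gaussTensor A₂ X Y Z W =
        gaussTensor B₁ X Y Z W + gaussTensor B₂ X Y Z W)
    (hIII : A₁ ∘ₗ A₁ + A₂ ∘ₗ A₂ = B₁ ∘ₗ B₁ + B₂ ∘ₗ B₂)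
    (μ : ℝ)
    (hμ : μ = Real.sqrt ((LinearMap.trace ℝ V A₁) ^ 2
      + (LinearMap.trace ℝ V A₂) ^ 2))
    (hμ0 : μ ≠ 0)
    (Aξ Bξ : V →ₗ[ℝ] V)
    (hAξ : Aξ = μ⁻¹ • ((LinearMap.trace ℝ V A₁) • A₂
      - (LinearMap.trace ℝ V A₂) • A₁))
    (hBξ : Bξ = μ⁻¹ • ((LinearMap.trace ℝ V B₁) • B₂
      - (LinearMap.trace ℝ V B₂) • B₁)) :
    (∀ X Y Z W : V, gaussTensor Aξ X Y Z W = gaussTensor Bξ X Y Z W) ∧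
      (∀ X Y Z W : V,
        ⟪Aξ X, W⟫ * ⟪Aξ Y, Z⟫ - ⟪Bξ X, W⟫ * ⟪Bξ Y, Z⟫ =
          ⟪Aξ X, Z⟫ * ⟪Aξ Y, W⟫ - ⟪Bξ X, Z⟫ * ⟪Bξ Y, W⟫) := by
  classical
  set t1 := LinearMap.trace ℝ V A₁ with ht1
  set t2 := LinearMap.trace ℝ V A₂ with ht2
  set s1 := LinearMap.trace ℝ V B₁ with hs1
  set s2 := LinearMap.trace ℝ V B₂ with hs2
  let b := stdOrthonormalBasis ℝ V
  -- trace via orthonormal basis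
  have htr : ∀ (M : V →ₗ[ℝ] V),
      LinearMap.trace ℝ V M = ∑ i, ⟪b i, M (b i)⟫ := by
    intro M
    rw [LinearMap.trace_eq_matrix_trace ℝ b.toBasis, Matrix.trace]
    refine Finset.sum_congr rfl fun i _ => ?_
    simp [Matrix.diag, LinearMap.toMatrix_apply,
      OrthonormalBasis.coe_toBasis_repr_apply, OrthonormalBasis.repr_apply_apply,
      OrthonormalBasis.coe_toBasis]
  -- contraction of the Gauss tensor
  have hcontr : ∀ (M : V →ₗ[ℝ] V), (∀ X Y : V, ⟪M X, Y⟫ = ⟪X, M Y⟫) → ∀ X W : V,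
      ∑ i, gaussTensor M X (b i) (b i) W
        = (LinearMap.trace ℝ V M) * ⟪M X, W⟫ - ⟪M (M X), W⟫ := by
    intro M hM X W
    have h1 : ∑ i, ⟪M X, b i⟫ * ⟪M (b i), W⟫ = ⟪M (M X), W⟫ := by
      have h2 : ∀ i, ⟪M X, b i⟫ * ⟪M (b i), W⟫ = ⟪M X, b i⟫ * ⟪b i, M W⟫ := by
        intro i; rw [hM (b i) W]
      rw [Finset.sum_congr rfl fun i _ => h2 i, b.sum_inner_mul_inner]
      exact (hM (M X) W).symm
    simp only [gaussTensor]
    rw [Finset.sum_sub_distrib, ← Finset.mul_sum, h1, htr M]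
    have h3 : ∑ i, ⟪M (b i), b i⟫ = ∑ i, ⟪b i, M (b i)⟫ :=
      Finset.sum_congr rfl fun i _ => real_inner_comm _ _
    rw [h3]
    ring
  -- the mean curvature identity
  have hHf : ∀ X W : V, t1 * ⟪A₁ X, W⟫ + t2 * ⟪A₂ X, W⟫
      = s1 * ⟪B₁ X, W⟫ + s2 * ⟪B₂ X, W⟫ := by
    intro X W
    have hsum : ∑ i, (gaussTensor A₁ X (b i) (b i) W + gaussTensor A₂ X (b i) (b i) W)
        = ∑ i, (gaussTensor B₁ X (b i) (b i) W + gaussTensor B₂ X (b i) (b i) W) :=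
      Finset.sum_congr rfl fun i _ => hGauss X (b i) (b i) W
    rw [Finset.sum_add_distrib, Finset.sum_add_distrib,
      hcontr A₁ hA₁ X W, hcontr A₂ hA₂ X W, hcontr B₁ hB₁ X W, hcontr B₂ hB₂ X W] at hsum
    have hIII' : ⟪A₁ (A₁ X), W⟫ + ⟪A₂ (A₂ X), W⟫
        = ⟪B₁ (B₁ X), W⟫ + ⟪B₂ (B₂ X), W⟫ := by
      have h := congrArg (fun (M : V →ₗ[ℝ] V) => ⟪M X, W⟫) hIII
      simpa [inner_add_left] using h
    rw [← ht1, ← ht2, ← hs1, ← hs2] at hsum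
    linarith
  have hH : t1 • A₁ + t2 • A₂ = s1 • B₁ + s2 • B₂ := by
    ext X
    apply ext_inner_right ℝ
    intro W
    simpa [inner_add_left, real_inner_smul_left] using hHf X W
  have hm2 : t1 ^ 2 + t2 ^ 2 = μ ^ 2 := by
    rw [hμ, Real.sq_sqrt (by positivity)]
  have hs2' : s1 ^ 2 + s2 ^ 2 = μ ^ 2 := by
    have h := congrArg (LinearMap.trace ℝ V) hH
    simp only [map_add, map_smul, smul_eq_mul, ← ht1, ← ht2, ← hs1, ← hs2] at h
    nlinarith [h, hm2]
  -- scalar form of ξ-components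
  have eA : ∀ u w : V, ⟪Aξ u, w⟫ = μ⁻¹ * (t1 * ⟪A₂ u, w⟫ - t2 * ⟪A₁ u, w⟫) := by
    intro u w
    rw [hAξ]
    simp [LinearMap.smul_apply, LinearMap.sub_apply, real_inner_smul_left,
      inner_sub_left, ← ht1, ← ht2]
  have eB : ∀ u w : V, ⟪Bξ u, w⟫ = μ⁻¹ * (s1 * ⟪B₂ u, w⟫ - s2 * ⟪B₁ u, w⟫) := by
    intro u w
    rw [hBξ]
    simp [LinearMap.smul_apply, LinearMap.sub_apply, real_inner_smul_left,
      inner_sub_left, ← hs1, ← hs2]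
  have main : ∀ X Y Z W : V, gaussTensor Aξ X Y Z W = gaussTensor Bξ X Y Z W := by
    intro X Y Z W
    have hG := hGauss X Y Z W
    simp only [gaussTensor] at hG ⊢
    have key := key_alg (μ ^ 2) t1 t2 s1 s2
      ⟪A₁ X, W⟫ ⟪A₂ X, W⟫ ⟪B₁ X, W⟫ ⟪B₂ X, W⟫
      ⟪A₁ Y, Z⟫ ⟪A₂ Y, Z⟫ ⟪B₁ Y, Z⟫ ⟪B₂ Y, Z⟫
      ⟪A₁ X, Z⟫ ⟪A₂ X, Z⟫ ⟪B₁ X, Z⟫ ⟪B₂ X, Z⟫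
      ⟪A₁ Y, W⟫ ⟪A₂ Y, W⟫ ⟪B₁ Y, W⟫ ⟪B₂ Y, W⟫
      hm2 hs2' hG (hHf X W) (hHf Y Z) (hHf X Z) (hHf Y W)
    rw [eA X W, eA Y Z, eA X Z, eA Y W, eB X W, eB Y Z, eB X Z, eB Y W]
    linear_combination μ⁻¹ ^ 2 * key
  refine ⟨main, fun X Y Z W => ?_⟩
  have h := main X Y Z W
  simp only [gaussTensor] at h
  linarith
end

section
/- Let V be a finite-dimensional real inner product space and let A, B be symmetric linear endomorphisms of V. Define β : V × V → ℝ² by β(X,Y) = (⟨AX,Y⟩, ⟨BX,Y⟩). Then β is null with respect to the Lorentzian inner product ⟨⟨(a,b),(c,d)⟩⟩ = ac − bd (i.e. ⟨⟨β(X,W),β(Y,Z)⟩⟩ = 0 for all X, Y, Z, W ∈ V) if and only if A = B or A = −B. -/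
open scoped RealInnerProductSpace

/-- For symmetric endomorphisms `A`, `B`, the bilinear map
`β(X,Y) = (⟪AX,Y⟫, ⟪BX,Y⟫)` is null with respect to the Lorentzian inner
product `⟨⟨(a,b),(c,d)⟩⟩ = ac − bd` if and only if `A = B` or `A = −B`. -/
theorem null_iff_pm
    {V : Type*} [NormedAddCommGroup V] [InnerProductSpace ℝ V]
    [FiniteDimensional ℝ V]
    (A B : V →ₗ[ℝ] V)
    (hA : ∀ X Y : V, ⟪A X, Y⟫ = ⟪X, A Y⟫)
    (hB : ∀ X Y : V, ⟪B X, Y⟫ = ⟪X, B Y⟫) :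
    (∀ X Y Z W : V,
        ⟪A X, W⟫ * ⟪A Y, Z⟫ - ⟪B X, W⟫ * ⟪B Y, Z⟫ = 0) ↔
      A = B ∨ A = -B := by
  constructor
  · intro h
    by_cases hz : ∀ Y Z : V, ⟪A Y, Z⟫ = 0
    · left
      ext X
      apply ext_inner_right ℝ
      intro W
      have h1 := h X X W W
      rw [hz X W] at h1
      have hb : ⟪B X, W⟫ = 0 := by nlinarith [h1]
      rw [hz X W, hb]
    · push_neg at hz
      obtain ⟨Y, Z, hYZ⟩ := hz
      have hsq := h Y Y Z Z
      have hcases : ⟪B Y, Z⟫ = ⟪A Y, Z⟫ ∨ ⟪B Y, Z⟫ = -⟪A Y, Z⟫ := by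
        rcases mul_self_eq_mul_self_iff.mp (show ⟪B Y, Z⟫ * ⟪B Y, Z⟫ = ⟪A Y, Z⟫ * ⟪A Y, Z⟫ by linarith) with h' | h'
        · exact Or.inl h'
        · exact Or.inr h'
      rcases hcases with hc | hc
      · left
        ext X
        apply ext_inner_right ℝ
        intro W
        have h1 := h X Y Z W
        rw [hc] at h1
        have h2 : (⟪A X, W⟫ - ⟪B X, W⟫) * ⟪A Y, Z⟫ = 0 := by ring_nf; ring_nf at h1; linarith
        rcases mul_eq_zero.mp h2 with h3 | h3
        · linarith
        · exact absurd h3 hYZ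
      · right
        ext X
        apply ext_inner_right ℝ
        intro W
        have h1 := h X Y Z W
        rw [hc] at h1
        have h2 : (⟪A X, W⟫ + ⟪B X, W⟫) * ⟪A Y, Z⟫ = 0 := by ring_nf; ring_nf at h1; linarith
        have h4 : ⟪A X, W⟫ = -⟪B X, W⟫ := by
          rcases mul_eq_zero.mp h2 with h3 | h3
          · linarith
          · exact absurd h3 hYZ
        simpa [inner_neg_left] using h4
  · rintro (rfl | rfl) X Y Z W
    · ring
    · simp only [LinearMap.neg_apply, inner_neg_left]
      ring
end

section
/- Let V be an n-dimensional real vector space and let β : V × V → ℝ² be a symmetric bilinear map that is flat with respect to the Lorentzian inner product ⟨⟨(a,b),(c,d)⟩⟩ = ac − bd and is not null. Then the nullity subspace N(β) = {X ∈ V : β(X,Y) = 0 for all Y ∈ V} satisfies dim N(β) ≥ n − 2. -/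
/-- The Lorentzian inner product on `ℝ²`: `⟨⟨(a,b),(c,d)⟩⟩ = ac − bd`. -/
def lorentzInner (u v : ℝ × ℝ) : ℝ := u.1 * v.1 - u.2 * v.2

set_option maxHeartbeats 1600000 in
/-- A symmetric flat (for the Lorentzian inner product) bilinear map
`β : V × V → ℝ²` which is not null has nullity of dimension at least `n − 2`. -/
theorem flat_not_null_nullity
    {V : Type*} [AddCommGroup V] [Module ℝ V] [FiniteDimensional ℝ V]
    {n : ℕ} (hn : Module.finrank ℝ V = n)
    (β : V →ₗ[ℝ] V →ₗ[ℝ] ℝ × ℝ)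
    (hsymm : ∀ X Y : V, β X Y = β Y X)
    (hflat : ∀ X Y Z W : V,
      lorentzInner (β X W) (β Y Z) = lorentzInner (β X Z) (β Y W))
    (hnotnull : ¬ ∀ X Y Z W : V, lorentzInner (β X W) (β Y Z) = 0) :
    n - 2 ≤ Module.finrank ℝ ↥(LinearMap.ker β) := by
  classical
  -- Key lemma: if `β e` has two values with nonzero determinant then `ker (β e) ≤ ker β`.
  have keylem : ∀ e A B : V,
      (β e A).1 * (β e B).2 - (β e A).2 * (β e B).1 ≠ 0 →
      LinearMap.ker (β e) ≤ LinearMap.ker β := by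
    intro e A B hdet Z hZ
    have hZ0 : β e Z = 0 := hZ
    have hZe : β Z e = 0 := by rw [hsymm Z e, hZ0]
    have hB : ∀ Y Y'' : V, lorentzInner (β Z Y) (β Y'' e) = 0 := by
      intro Y Y''
      have h := hflat Z Y'' e Y
      rw [hZe] at h
      simpa [lorentzInner] using h
    simp only [LinearMap.mem_ker]
    ext Y
    · -- first component
      have h1 : lorentzInner (β Z Y) (β e A) = 0 := by
        rw [hsymm e A]; exact hB Y A
      have h2 : lorentzInner (β Z Y) (β e B) = 0 := by
        rw [hsymm e B]; exact hB Y B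
      simp only [lorentzInner] at h1 h2
      have key : (β Z Y).1 * ((β e A).1 * (β e B).2 - (β e A).2 * (β e B).1) = 0 := by
        linear_combination (β e B).2 * h1 - (β e A).2 * h2
      have := mul_eq_zero.mp key
      simpa using this.resolve_right hdet
    · have h1 : lorentzInner (β Z Y) (β e A) = 0 := by
        rw [hsymm e A]; exact hB Y A
      have h2 : lorentzInner (β Z Y) (β e B) = 0 := by
        rw [hsymm e B]; exact hB Y B
      simp only [lorentzInner] at h1 h2
      have key : (β Z Y).2 * ((β e A).1 * (β e B).2 - (β e A).2 * (β e B).1) = 0 := by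
        linear_combination (β e B).1 * h1 - (β e A).1 * h2
      have := mul_eq_zero.mp key
      simpa using this.resolve_right hdet
  -- Step 1: there is e with β e e non-null.
  have step1 : ∃ e : V, lorentzInner (β e e) (β e e) ≠ 0 := by
    by_contra hc
    push_neg at hc
    apply hnotnull
    -- first: all values are null
    have hquad : ∀ X Y : V, lorentzInner (β X Y) (β X Y) = 0 := by
      intro X Y
      have hAC : lorentzInner (β X X) (β Y Y) = lorentzInner (β X Y) (β X Y) := by
        have := hflat X Y Y X
        rw [hsymm Y X] at this
        exact this
      have hp : β (X + Y) (X + Y) = β X X + β X Y + β X Y + β Y Y := by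
        simp [map_add, LinearMap.add_apply]
        rw [hsymm Y X]
        abel
      have hm : β (X - Y) (X - Y) = β X X - β X Y - β X Y + β Y Y := by
        simp [map_sub, LinearMap.sub_apply]
        rw [hsymm Y X]
        abel
      have h1 := hc (X + Y)
      have h2 := hc (X - Y)
      have h3 := hc X
      have h4 := hc Y
      rw [hp] at h1
      rw [hm] at h2
      simp only [lorentzInner, Prod.fst_add, Prod.snd_add, Prod.fst_sub, Prod.snd_sub] at h1 h2 h3 h4 hAC ⊢
      nlinarith [h1, h2, h3, h4, hAC]
    -- polarize in second argument
    have hsame : ∀ X A B : V, lorentzInner (β X A) (β X B) = 0 := by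
      intro X A B
      have h1 := hquad X (A + B)
      have h2 := hquad X A
      have h3 := hquad X B
      simp only [map_add, lorentzInner, Prod.fst_add, Prod.snd_add] at h1 h2 h3 ⊢
      nlinarith [h1, h2, h3]
    -- polarize in first argument, using flatness
    intro X Y Z W
    have h1 := hsame (X + Y) W Z
    have h2 := hsame X W Z
    have h3 := hsame Y W Z
    have hf : lorentzInner (β Y W) (β X Z) = lorentzInner (β X W) (β Y Z) := by
      have h := hflat Y X Z W
      simp only [lorentzInner] at h ⊢
      linarith [h]
    simp only [map_add, LinearMap.add_apply, lorentzInner, Prod.fst_add, Prod.snd_add] at h1 h2 h3 hf ⊢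
    nlinarith [h1, h2, h3, hf]
  obtain ⟨e₀, hw⟩ := step1
  -- find e with ker (β e) ≤ ker β
  have main : ∃ e : V, LinearMap.ker (β e) ≤ LinearMap.ker β := by
    by_cases hcase : ∀ Z ∈ LinearMap.ker (β e₀), β Z = 0
    · exact ⟨e₀, fun Z hZ => by simpa [LinearMap.mem_ker] using hcase Z hZ⟩
    · push_neg at hcase
      obtain ⟨Z, hZker, hZne⟩ := hcase
      have hZ0 : β e₀ Z = 0 := hZker
      have hZe : β Z e₀ = 0 := by rw [hsymm Z e₀, hZ0]
      obtain ⟨Y₁, hY₁⟩ : ∃ Y₁, β Z Y₁ ≠ 0 := by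
        by_contra hc
        push_neg at hc
        exact hZne (LinearMap.ext fun Y => hc Y)
      set u := β Z Y₁ with hu
      set w := β e₀ e₀ with hwdef
      -- u ⊥ w
      have hperp : lorentzInner u w = 0 := by
        have h := hflat Z e₀ e₀ Y₁
        rw [hZe] at h
        simpa [lorentzInner, hu, hwdef] using h
      -- det(w, u) ≠ 0
      have hdetwu : w.1 * u.2 - w.2 * u.1 ≠ 0 := by
        intro hdet
        apply hY₁
        have hqw : w.1 * w.1 - w.2 * w.2 ≠ 0 := by
          simpa [lorentzInner, hwdef] using hw
        simp only [lorentzInner] at hperp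
        have h1 : u.1 * (w.1 * w.1 - w.2 * w.2) = 0 := by
          linear_combination w.1 * hperp + w.2 * hdet
        have h2 : u.2 * (w.1 * w.1 - w.2 * w.2) = 0 := by
          linear_combination w.2 * hperp + w.1 * hdet
        have hu1 : u.1 = 0 := by
          rcases mul_eq_zero.mp h1 with h | h
          · exact h
          · exact absurd h hqw
        have hu2 : u.2 = 0 := by
          rcases mul_eq_zero.mp h2 with h | h
          · exact h
          · exact absurd h hqw
        rw [hu]
        exact Prod.ext hu1 hu2
      -- choose t ∈ {1, -1} so that e' = e₀ + t • Z works
      set D := w.1 * (β e₀ Y₁).2 - w.2 * (β e₀ Y₁).1 with hD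
      have hchoice : ∃ t : ℝ, D + t * (w.1 * u.2 - w.2 * u.1) ≠ 0 := by
        by_cases h : D + 1 * (w.1 * u.2 - w.2 * u.1) ≠ 0
        · exact ⟨1, h⟩
        · push_neg at h
          refine ⟨-1, ?_⟩
          intro h'
          apply hdetwu
          linarith [h, h']
      obtain ⟨t, ht⟩ := hchoice
      refine ⟨e₀ + t • Z, keylem (e₀ + t • Z) e₀ Y₁ ?_⟩
      have he'e₀ : β (e₀ + t • Z) e₀ = w := by
        rw [LinearMap.map_add₂, LinearMap.map_smul₂, hZe, smul_zero, add_zero]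
      have he'Y₁ : β (e₀ + t • Z) Y₁ = β e₀ Y₁ + t • u := by
        rw [LinearMap.map_add₂, LinearMap.map_smul₂]
      rw [he'e₀, he'Y₁]
      simp only [Prod.fst_add, Prod.snd_add, Prod.smul_fst, Prod.smul_snd, smul_eq_mul]
      intro h
      apply ht
      linear_combination h - hD
  obtain ⟨e, hle⟩ := main
  have hmono : Module.finrank ℝ ↥(LinearMap.ker (β e)) ≤ Module.finrank ℝ ↥(LinearMap.ker β) :=
    Submodule.finrank_mono hle
  have hrn := LinearMap.finrank_range_add_finrank_ker (β e)
  have hfp : Module.finrank ℝ (ℝ × ℝ) = 2 := by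
    rw [Module.finrank_prod, Module.finrank_self]
  have hr2 : Module.finrank ℝ ↥(LinearMap.range (β e)) ≤ 2 := by
    rw [← hfp]
    exact Submodule.finrank_le (LinearMap.range (β e))
  rw [hn] at hrn
  omega
end

section
/- Let V be an n-dimensional real inner product space with n ≥ 2 and let A, B be symmetric linear endomorphisms of V with tr A = tr B = 0 and A² = B². Assume that the symmetric bilinear map β : V × V → ℝ² given by β(X,Y) = (⟨AX,Y⟩, ⟨BX,Y⟩) is flat with respect to the Lorentzian inner product ⟨⟨(a,b),(c,d)⟩⟩ = ac − bd, and that A ≠ B and A ≠ −B. Then ker A = ker B, this common kernel has dimension exactly n − 2, and A and B both have rank 2. -/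
open scoped RealInnerProductSpace

lemma exists_unit_eigen {V : Type*} [NormedAddCommGroup V] [InnerProductSpace ℝ V]
    [FiniteDimensional ℝ V] (S : V →ₗ[ℝ] V) (hS : S.IsSymmetric) (hS0 : S ≠ 0) :
    ∃ (x : V) (μ : ℝ), ‖x‖ = 1 ∧ μ ≠ 0 ∧ S x = μ • x := by
  have hrk : Module.finrank ℝ V = Module.finrank ℝ V := rfl
  set b := hS.eigenvectorBasis hrk with hb
  by_cases h : ∀ i, hS.eigenvalues hrk i = 0
  · exfalso
    apply hS0
    apply b.toBasis.ext
    intro i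
    have := hS.apply_eigenvectorBasis hrk i
    simp [h i, ← hb] at this
    simp [this]
  · push_neg at h
    obtain ⟨i, hi⟩ := h
    exact ⟨b i, hS.eigenvalues hrk i, b.orthonormal.1 i, hi,
      hS.apply_eigenvectorBasis hrk i⟩


set_option maxHeartbeats 2000000 in
/-- If `A`, `B` are symmetric, trace free, with `A² = B²`, the associated
`ℝ²`-valued bilinear map is flat for the Lorentzian product, and `A ≠ ±B`, then
`A` and `B` have the same kernel, of dimension exactly `n − 2`, and both have
rank `2`. -/
theorem common_kernel_rank_two
    {V : Type*} [NormedAddCommGroup V] [InnerProductSpace ℝ V]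
    [FiniteDimensional ℝ V]
    {n : ℕ} (hn : Module.finrank ℝ V = n) (hn2 : 2 ≤ n)
    (A B : V →ₗ[ℝ] V)
    (hA : ∀ X Y : V, ⟪A X, Y⟫ = ⟪X, A Y⟫)
    (hB : ∀ X Y : V, ⟪B X, Y⟫ = ⟪X, B Y⟫)
    (htrA : LinearMap.trace ℝ V A = 0)
    (htrB : LinearMap.trace ℝ V B = 0)
    (hsq : A ∘ₗ A = B ∘ₗ B)
    (hflat : ∀ X Y Z W : V,
      ⟪A X, W⟫ * ⟪A Y, Z⟫ - ⟪B X, W⟫ * ⟪B Y, Z⟫ =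
        ⟪A X, Z⟫ * ⟪A Y, W⟫ - ⟪B X, Z⟫ * ⟪B Y, W⟫)
    (hAB : A ≠ B) (hAB' : A ≠ -B) :
    LinearMap.ker A = LinearMap.ker B ∧
      Module.finrank ℝ ↥(LinearMap.ker A) = n - 2 ∧
      Module.finrank ℝ ↥(LinearMap.range A) = 2 ∧
      Module.finrank ℝ ↥(LinearMap.range B) = 2 := by
  set C : V →ₗ[ℝ] V := A + B with hCdef
  set D : V →ₗ[ℝ] V := A - B with hDdef
  have hCapp : ∀ X, C X = A X + B X := fun X => rfl
  have hDapp : ∀ X, D X = A X - B X := fun X => rfl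
  have hC : C.IsSymmetric := by
    intro x y; simp [hCapp, inner_add_left, inner_add_right, hA, hB]
  have hD : D.IsSymmetric := by
    intro x y; simp [hDapp, inner_sub_left, inner_sub_right, hA, hB]
  have hsq' : ∀ X, A (A X) = B (B X) := fun X => LinearMap.ext_iff.mp hsq X
  have hanti : ∀ X, C (D X) = - D (C X) := by
    intro X
    have h1 : C (D X) = A (A X) - A (B X) + (B (A X) - B (B X)) := by
      simp [hCapp, hDapp, map_sub]
    have h2 : D (C X) = A (A X) + A (B X) - (B (A X) + B (B X)) := by
      simp [hCapp, hDapp, map_add]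
    rw [h1, h2, hsq' X]; abel
  have hC0 : C ≠ 0 := by
    intro h; exact hAB' (by rw [eq_neg_iff_add_eq_zero]; exact h)
  have hD0 : D ≠ 0 := by
    intro h; exact hAB (by rwa [sub_eq_zero] at h)
  -- the key operator identity from flatness
  have hstar : ∀ X Y Z : V,
      ⟪D Y, Z⟫ • C X + ⟪C Y, Z⟫ • D X = ⟪C X, Z⟫ • D Y + ⟪D X, Z⟫ • C Y := by
    intro X Y Z
    apply ext_inner_right ℝ
    intro W
    simp only [hCapp, hDapp, inner_add_left, inner_sub_left, inner_smul_left,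
      inner_add_right, inner_sub_right, conj_trivial]
    linear_combination 2 * hflat X Y Z W
  -- eigenvector of D
  obtain ⟨e, μ, he1, hμ, hDe⟩ := exists_unit_eigen D hD hD0
  have hee : ⟪e, e⟫ = (1 : ℝ) := by
    rw [real_inner_self_eq_norm_sq, he1]; norm_num
  set v : V := C e with hvdef
  have hDv : D v = -μ • v := by
    have h := hanti e
    rw [hDe, map_smul] at h
    simpa [neg_smul] using neg_eq_iff_eq_neg.mp h.symm
  have hve : ⟪v, e⟫ = 0 := by
    have h1 : ⟪v, D e⟫ = ⟪D v, e⟫ := (hD v e).symm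
    rw [hDe, hDv, inner_smul_right, inner_smul_left, conj_trivial] at h1
    have h2 : μ * ⟪v, e⟫ = 0 := by linarith
    rcases mul_eq_zero.mp h2 with h | h
    · exact absurd h hμ
    · exact h
  -- structure formula for C
  have hCX : ∀ X, C X = ⟪X, v⟫ • e + ⟪X, e⟫ • v := by
    intro X
    have h := hstar X e e
    have hCee : ⟪C e, e⟫ = 0 := hve
    have hDee : ⟪D e, e⟫ = μ := by rw [hDe, inner_smul_left, conj_trivial, hee, mul_one]
    have hCXe : ⟪C X, e⟫ = ⟪X, v⟫ := by rw [hC X e]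
    have hDXe : ⟪D X, e⟫ = μ * ⟪X, e⟫ := by
      rw [hD X e, hDe, inner_smul_right]
    rw [hCee, hDee, hCXe, hDXe, hDe] at h
    rw [← hvdef] at h
    simp only [zero_smul, add_zero, zero_add] at h
    have h2 : μ • C X = μ • (⟪X, v⟫ • e + ⟪X, e⟫ • v) := by
      rw [h]; module
    exact smul_right_injective V hμ h2
  have hv0 : v ≠ 0 := by
    intro h
    apply hC0
    ext X
    simp [hCX X, h]
  -- eigenvector of C and structure formula for D
  obtain ⟨f, ν, hf1, hν, hCf⟩ := exists_unit_eigen C hC hC0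
  have hff : ⟪f, f⟫ = (1 : ℝ) := by
    rw [real_inner_self_eq_norm_sq, hf1]; norm_num
  set w : V := D f with hwdef
  have hCw : C w = -ν • w := by
    have h := hanti f
    rw [hCf, map_smul] at h
    rw [h, neg_smul]
  have hwf : ⟪w, f⟫ = 0 := by
    have h1 : ⟪w, C f⟫ = ⟪C w, f⟫ := (hC w f).symm
    rw [hCf, hCw, inner_smul_right, inner_smul_left, conj_trivial] at h1
    have h2 : ν * ⟪w, f⟫ = 0 := by linarith
    rcases mul_eq_zero.mp h2 with h | h
    · exact absurd h hν
    · exact h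
  have hDX : ∀ X, D X = ⟪X, w⟫ • f + ⟪X, f⟫ • w := by
    intro X
    have h := hstar X f f
    have hDff : ⟪D f, f⟫ = 0 := hwf
    have hCff : ⟪C f, f⟫ = ν := by rw [hCf, inner_smul_left, conj_trivial, hff, mul_one]
    have hDXf : ⟪D X, f⟫ = ⟪X, w⟫ := by rw [hD X f]
    have hCXf : ⟪C X, f⟫ = ν * ⟪X, f⟫ := by
      rw [hC X f, hCf, inner_smul_right]
    rw [hDff, hCff, hDXf, hCXf, hCf] at h
    rw [← hwdef] at h
    simp only [zero_smul, add_zero, zero_add] at h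
    have h2 : ν • D X = ν • (⟪X, w⟫ • f + ⟪X, f⟫ • w) := by
      rw [h]; module
    exact smul_right_injective V hν h2
  have hvv : ⟪v, v⟫ ≠ 0 := fun h => hv0 (inner_self_eq_zero.mp h)
  -- f lies in span of e, v
  have hfco : f = (ν⁻¹ * ⟪f, v⟫) • e + (ν⁻¹ * ⟪f, e⟫) • v := by
    have h : ν • f = ⟪f, v⟫ • e + ⟪f, e⟫ • v := by rw [← hCf]; exact hCX f
    apply smul_right_injective V hν
    dsimp only
    rw [smul_add, smul_smul, smul_smul, ← mul_assoc, mul_inv_cancel₀ hν, one_mul,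
      ← mul_assoc, mul_inv_cancel₀ hν, one_mul, h]
  have hwco : w = (-(ν⁻¹) * ⟪w, v⟫) • e + (-(ν⁻¹) * ⟪w, e⟫) • v := by
    have h : (-ν) • w = ⟪w, v⟫ • e + ⟪w, e⟫ • v := by rw [← hCw]; exact hCX w
    apply smul_right_injective V (neg_ne_zero.mpr hν)
    dsimp only
    rw [smul_add, smul_smul, smul_smul]
    rw [show -ν * (-(ν⁻¹) * ⟪w, v⟫) = ⟪w, v⟫ by field_simp,
      show -ν * (-(ν⁻¹) * ⟪w, e⟫) = ⟪w, e⟫ by field_simp, h]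
  -- D vanishes on the orthogonal complement of e, v
  have hkerD0 : ∀ X, ⟪X, e⟫ = 0 → ⟪X, v⟫ = 0 → D X = 0 := by
    intro X h1 h2
    have hf' : ⟪X, f⟫ = 0 := by
      conv_lhs => rw [hfco]
      rw [inner_add_right, inner_smul_right, inner_smul_right, h1, h2]
      ring
    have hw' : ⟪X, w⟫ = 0 := by
      conv_lhs => rw [hwco]
      rw [inner_add_right, inner_smul_right, inner_smul_right, h1, h2]
      ring
    rw [hDX X, hf', hw', zero_smul, zero_smul, add_zero]
  have hev : ⟪e, v⟫ = 0 := by rw [real_inner_comm]; exact hve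
  -- kernel of C
  have hkerC_iff : ∀ X, C X = 0 ↔ (⟪X, e⟫ = 0 ∧ ⟪X, v⟫ = 0) := by
    intro X
    constructor
    · intro h
      have h1 : ⟪C X, e⟫ = 0 := by rw [h, inner_zero_left]
      have h2 : ⟪C X, v⟫ = 0 := by rw [h, inner_zero_left]
      rw [hCX X, inner_add_left, inner_smul_left, inner_smul_left, conj_trivial,
        conj_trivial, hee, hve, mul_one, mul_zero, add_zero] at h1
      rw [hCX X, inner_add_left, inner_smul_left, inner_smul_left, conj_trivial,
        conj_trivial, hev, mul_zero, zero_add] at h2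
      exact ⟨(mul_eq_zero.mp h2).resolve_right hvv, h1⟩
    · rintro ⟨h1, h2⟩
      rw [hCX X, h1, h2, zero_smul, zero_smul, add_zero]
  have hCXe' : ∀ X, ⟪C X, e⟫ = ⟪X, v⟫ := fun X => by rw [hC X e]
  have hDXe' : ∀ X, ⟪D X, e⟫ = μ * ⟪X, e⟫ := fun X => by
    rw [hD X e, hDe, inner_smul_right]
  have hCv : C v = ⟪v, v⟫ • e := by rw [hCX v, hve, zero_smul, add_zero]
  have hCXv' : ∀ X, ⟪C X, v⟫ = ⟪v, v⟫ * ⟪X, e⟫ := fun X => by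
    rw [hC X v, hCv, inner_smul_right, mul_comm ⟪v,v⟫ ⟪X,e⟫]
  have hDXv' : ∀ X, ⟪D X, v⟫ = -μ * ⟪X, v⟫ := fun X => by
    rw [hD X v, hDv, inner_smul_right]
  have hvvpos : (0:ℝ) < ⟪v, v⟫ := by
    rcases lt_or_eq_of_le (real_inner_self_nonneg (x := v)) with h | h
    · exact h
    · exact absurd h.symm hvv
  -- kernels of A and B coincide with that of C
  have hkerAC : ∀ X, A X = 0 ↔ C X = 0 := by
    intro X
    constructor
    · intro h
      have hsum : C X = - D X := by
        have h2 : C X + D X = A X + A X := by simp [hCapp, hDapp]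
        rw [h, add_zero] at h2
        exact eq_neg_of_add_eq_zero_left h2
      have e1 : ⟪X, v⟫ = -(μ * ⟪X, e⟫) := by
        have := congrArg (fun y => ⟪y, e⟫) hsum
        simpa [hCXe' X, hDXe' X, inner_neg_left] using this
      have e2 : ⟪v, v⟫ * ⟪X, e⟫ = μ * ⟪X, v⟫ := by
        have := congrArg (fun y => ⟪y, v⟫) hsum
        simp only [hCXv' X, hDXv' X, inner_neg_left] at this
        rw [this]; ring
      have h3 : (⟪v, v⟫ + μ ^ 2) * ⟪X, e⟫ = 0 := by linear_combination e2 + μ * e1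
      have hq : ⟪X, e⟫ = 0 := by
        rcases mul_eq_zero.mp h3 with h' | h'
        · nlinarith
        · exact h'
      have hp : ⟪X, v⟫ = 0 := by rw [e1, hq, mul_zero, neg_zero]
      exact (hkerC_iff X).mpr ⟨hq, hp⟩
    · intro h
      obtain ⟨h1, h2⟩ := (hkerC_iff X).mp h
      have hDX0 : D X = 0 := hkerD0 X h1 h2
      have h4 : C X + D X = A X + A X := by simp [hCapp, hDapp]
      rw [h, hDX0, add_zero] at h4
      have h5 : (2:ℝ) • A X = 0 := by rw [two_smul]; exact h4.symm
      exact (smul_eq_zero.mp h5).resolve_left (by norm_num)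
  have hkerBC : ∀ X, B X = 0 ↔ C X = 0 := by
    intro X
    constructor
    · intro h
      have hsum : C X = D X := by
        have h2 : C X - D X = B X + B X := by simp [hCapp, hDapp]
        rw [h, add_zero] at h2
        exact sub_eq_zero.mp h2
      have e1 : ⟪X, v⟫ = μ * ⟪X, e⟫ := by
        have := congrArg (fun y => ⟪y, e⟫) hsum
        simpa [hCXe' X, hDXe' X] using this
      have e2 : ⟪v, v⟫ * ⟪X, e⟫ = -(μ * ⟪X, v⟫) := by
        have := congrArg (fun y => ⟪y, v⟫) hsum
        simp only [hCXv' X, hDXv' X] at this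
        rw [this]; ring
      have h3 : (⟪v, v⟫ + μ ^ 2) * ⟪X, e⟫ = 0 := by linear_combination e2 - μ * e1
      have hq : ⟪X, e⟫ = 0 := by
        rcases mul_eq_zero.mp h3 with h' | h'
        · nlinarith
        · exact h'
      have hp : ⟪X, v⟫ = 0 := by rw [e1, hq, mul_zero]
      exact (hkerC_iff X).mpr ⟨hq, hp⟩
    · intro h
      obtain ⟨h1, h2⟩ := (hkerC_iff X).mp h
      have hDX0 : D X = 0 := hkerD0 X h1 h2
      have h4 : C X - D X = B X + B X := by simp [hCapp, hDapp]
      rw [h, hDX0, sub_zero] at h4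
      have h5 : (2:ℝ) • B X = 0 := by rw [two_smul]; exact h4.symm
      exact (smul_eq_zero.mp h5).resolve_left (by norm_num)
  have hkerAeq : LinearMap.ker A = LinearMap.ker C := by
    ext X; simpa [LinearMap.mem_ker] using hkerAC X
  have hkerBeq : LinearMap.ker B = LinearMap.ker C := by
    ext X; simpa [LinearMap.mem_ker] using hkerBC X
  -- range of C is the span of e and v
  have hrangeC : LinearMap.range C = Submodule.span ℝ {e, v} := by
    apply le_antisymm
    · rintro _ ⟨X, rfl⟩
      rw [hCX X]
      exact Submodule.add_mem _
        (Submodule.smul_mem _ _ (Submodule.subset_span (Set.mem_insert _ _)))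
        (Submodule.smul_mem _ _ (Submodule.subset_span
          (Set.mem_insert_of_mem _ rfl)))
    · rw [Submodule.span_le]
      rintro x hx
      rcases hx with rfl | hx
      · exact ⟨⟪v, v⟫⁻¹ • v, by
          rw [map_smul, hCv, smul_smul, inv_mul_cancel₀ hvv, one_smul]⟩
      · rcases hx with rfl
        exact ⟨e, rfl⟩
  have hli : LinearIndependent ℝ ![e, v] := by
    rw [LinearIndependent.pair_iff]
    intro s t hst
    have h1 : ⟪s • e + t • v, e⟫ = 0 := by rw [hst, inner_zero_left]
    have h2 : ⟪s • e + t • v, v⟫ = 0 := by rw [hst, inner_zero_left]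
    rw [inner_add_left, inner_smul_left, inner_smul_left, conj_trivial, conj_trivial,
      hee, hve, mul_one, mul_zero, add_zero] at h1
    rw [inner_add_left, inner_smul_left, inner_smul_left, conj_trivial, conj_trivial,
      hev, mul_zero, zero_add] at h2
    exact ⟨h1, (mul_eq_zero.mp h2).resolve_right hvv⟩
  have hspan2 : Module.finrank ℝ (Submodule.span ℝ {e, v}) = 2 := by
    have h := finrank_span_eq_card hli
    have hr : Set.range ![e, v] = {e, v} := by
      simp only [Matrix.range_cons, Matrix.range_empty, Set.union_empty,
        Set.union_singleton]
      exact Set.pair_comm v e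
    rw [hr] at h
    simpa using h
  have hrk := LinearMap.finrank_range_add_finrank_ker C
  rw [hrangeC, hspan2, hn] at hrk
  have hkerCrk : Module.finrank ℝ (LinearMap.ker C) = n - 2 := by omega
  have hrkA := LinearMap.finrank_range_add_finrank_ker A
  have hrkB := LinearMap.finrank_range_add_finrank_ker B
  rw [hkerAeq, hkerCrk, hn] at hrkA
  rw [hkerBeq, hkerCrk, hn] at hrkB
  refine ⟨hkerAeq.trans hkerBeq.symm, ?_, by omega, by omega⟩
  rw [hkerAeq, hkerCrk]
end

section
/- Let V be a 2-dimensional real inner product space and let A, B be symmetric linear endomorphisms of V with tr A = tr B = 0, A ≠ 0, and A² = B². Then there exists a unique linear isometry R of V with det R = 1 (a rotation) such that B = A ∘ R. -/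
open scoped RealInnerProductSpace
open Matrix

open Matrix in
theorem rot_matrix_aux (M N : Matrix (Fin 2) (Fin 2) ℝ)
    (hM : Mᵀ = M) (hN : Nᵀ = N) (htM : M.trace = 0) (htN : N.trace = 0)
    (hM0 : M ≠ 0) (hsq : M * M = N * N) :
    M.det ≠ 0 ∧ (M⁻¹ * N).det = 1 ∧ (M⁻¹ * N)ᵀ * (M⁻¹ * N) = 1 ∧ N = M * (M⁻¹ * N) := by
  have hM10 : M 1 0 = M 0 1 := by conv_lhs => rw [← hM, Matrix.transpose_apply]
  have hN10 : N 1 0 = N 0 1 := by conv_lhs => rw [← hN, Matrix.transpose_apply]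
  have hM11 : M 1 1 = -M 0 0 := by
    have := htM; rw [Matrix.trace_fin_two] at this; linarith
  have hN11 : N 1 1 = -N 0 0 := by
    have := htN; rw [Matrix.trace_fin_two] at this; linarith
  have hdetM : M.det = -(M 0 0 ^ 2 + M 0 1 ^ 2) := by
    rw [Matrix.det_fin_two, hM10, hM11]; ring
  have hdetN : N.det = -(N 0 0 ^ 2 + N 0 1 ^ 2) := by
    rw [Matrix.det_fin_two, hN10, hN11]; ring
  have hpos : M 0 0 ^ 2 + M 0 1 ^ 2 > 0 := by
    rcases eq_or_ne (M 0 0) 0 with h0 | h0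
    · rcases eq_or_ne (M 0 1) 0 with h1 | h1
      · exfalso; apply hM0; ext i j
        fin_cases i <;> fin_cases j <;>
          simp_all
      · positivity
    · positivity
  have hkey : M 0 0 ^ 2 + M 0 1 ^ 2 = N 0 0 ^ 2 + N 0 1 ^ 2 := by
    have h00 := congrFun (congrFun hsq 0) 0
    simp only [Matrix.mul_apply, Fin.sum_univ_two] at h00
    rw [hM10, hN10] at h00
    nlinarith [h00]
  have hdM : M.det ≠ 0 := by rw [hdetM]; linarith
  have hdN : N.det ≠ 0 := by rw [hdetN, ← hkey]; linarith
  have huM : IsUnit M.det := isUnit_iff_ne_zero.mpr hdM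
  have huN : IsUnit N.det := isUnit_iff_ne_zero.mpr hdN
  have hNeq : N = M * (M⁻¹ * N) := by
    rw [← Matrix.mul_assoc, Matrix.mul_nonsing_inv _ huM, Matrix.one_mul]
  refine ⟨hdM, ?_, ?_, hNeq⟩
  · rw [Matrix.det_mul, Matrix.det_nonsing_inv, Ring.inverse_eq_inv', hdetM, hdetN, ← hkey]
    exact inv_mul_cancel₀ (by nlinarith [hpos])
  · have hPT : (M⁻¹ * N)ᵀ = N * M⁻¹ := by
      rw [Matrix.transpose_mul, hN, Matrix.transpose_nonsing_inv, hM]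
    rw [hPT, Matrix.mul_assoc, ← Matrix.mul_assoc M⁻¹, ← Matrix.mul_inv_rev, hsq,
      Matrix.mul_inv_rev, Matrix.mul_assoc, Matrix.nonsing_inv_mul _ huN, Matrix.mul_one,
      Matrix.mul_nonsing_inv _ huN]

/-- If `A`, `B` are symmetric trace-free endomorphisms of a 2-dimensional real
inner product space with `A ≠ 0` and `A² = B²`, then there is a unique rotation
`R` (linear isometry of determinant one) with `B = A ∘ R`. -/
theorem exists_unique_rotation
    {V : Type*} [NormedAddCommGroup V] [InnerProductSpace ℝ V]
    [FiniteDimensional ℝ V] (hdim : Module.finrank ℝ V = 2)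
    (A B : V →ₗ[ℝ] V)
    (hA : ∀ X Y : V, ⟪A X, Y⟫ = ⟪X, A Y⟫)
    (hB : ∀ X Y : V, ⟪B X, Y⟫ = ⟪X, B Y⟫)
    (htrA : LinearMap.trace ℝ V A = 0)
    (htrB : LinearMap.trace ℝ V B = 0)
    (hA0 : A ≠ 0)
    (hsq : A ∘ₗ A = B ∘ₗ B) :
    ∃! R : V ≃ₗᵢ[ℝ] V,
      LinearMap.det (R.toLinearEquiv : V →ₗ[ℝ] V) = 1 ∧
        B = A ∘ₗ (R.toLinearEquiv : V →ₗ[ℝ] V) := by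
  classical
  let b : OrthonormalBasis (Fin 2) ℝ V :=
    (stdOrthonormalBasis ℝ V).reindex (finCongr hdim)
  set M := LinearMap.toMatrix b.toBasis b.toBasis A with hMdef
  set N := LinearMap.toMatrix b.toBasis b.toBasis B with hNdef
  -- matrix entries are inner products
  have hentry : ∀ (f : V →ₗ[ℝ] V) (i j : Fin 2),
      (LinearMap.toMatrix b.toBasis b.toBasis f) i j = ⟪b i, f (b j)⟫ := by
    intro f i j
    rw [LinearMap.toMatrix_apply, OrthonormalBasis.coe_toBasis,
      OrthonormalBasis.coe_toBasis_repr_apply, OrthonormalBasis.repr_apply_apply]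
  have hsymm : ∀ (f : V →ₗ[ℝ] V), (∀ X Y : V, ⟪f X, Y⟫ = ⟪X, f Y⟫) →
      (LinearMap.toMatrix b.toBasis b.toBasis f)ᵀ
        = LinearMap.toMatrix b.toBasis b.toBasis f := by
    intro f hf
    ext i j
    rw [Matrix.transpose_apply, hentry, hentry, ← hf, real_inner_comm]
  have hMsym : Mᵀ = M := hsymm A hA
  have hNsym : Nᵀ = N := hsymm B hB
  have htM : M.trace = 0 := by
    rw [hMdef, ← LinearMap.trace_eq_matrix_trace]; exact htrA
  have htN : N.trace = 0 := by
    rw [hNdef, ← LinearMap.trace_eq_matrix_trace]; exact htrB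
  have hM0 : M ≠ 0 := by
    intro h
    apply hA0
    apply (LinearMap.toMatrix b.toBasis b.toBasis).injective
    rw [← hMdef, h, map_zero]
  have hsqM : M * M = N * N := by
    rw [hMdef, hNdef, ← LinearMap.toMatrix_comp, ← LinearMap.toMatrix_comp, hsq]
  obtain ⟨hdM, hdetP, horth, hNMP⟩ := rot_matrix_aux M N hMsym hNsym htM htN hM0 hsqM
  set P := M⁻¹ * N with hPdef
  -- A is injective
  have hdetA : LinearMap.det A ≠ 0 := by
    rw [← LinearMap.det_toMatrix b.toBasis]; exact hdM
  have hinjA : Function.Injective A :=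
    (LinearMap.equivOfDetNeZero A hdetA).injective
  -- the candidate linear map
  set Rlin : V →ₗ[ℝ] V := Matrix.toLin b.toBasis b.toBasis P with hRdef
  have hRmat : LinearMap.toMatrix b.toBasis b.toBasis Rlin = P := by
    rw [hRdef, LinearMap.toMatrix_toLin]
  -- coordinates of Rlin
  have hrepr : ∀ x : V, (fun i => b.toBasis.repr (Rlin x) i)
      = P.mulVec (fun i => b.toBasis.repr x i) := by
    intro x
    rw [← hRmat, LinearMap.toMatrix_mulVec_repr]
  -- inner products via coordinates
  have hdot : ∀ x y : V,
      ⟪x, y⟫ = (fun i => b.toBasis.repr x i) ⬝ᵥ (fun i => b.toBasis.repr y i) := by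
    intro x y
    rw [← OrthonormalBasis.sum_inner_mul_inner b x y]
    simp only [dotProduct, OrthonormalBasis.coe_toBasis_repr_apply,
      OrthonormalBasis.repr_apply_apply, real_inner_comm]
  have hinner : ∀ x y : V, ⟪Rlin x, Rlin y⟫ = ⟪x, y⟫ := by
    intro x y
    rw [hdot, hdot, hrepr, hrepr, Matrix.dotProduct_mulVec, Matrix.vecMul_mulVec, horth,
      Matrix.vecMul_one]
  -- build the isometry
  set li : V →ₗᵢ[ℝ] V := Rlin.isometryOfInner hinner with hlidef
  set R : V ≃ₗᵢ[ℝ] V := li.toLinearIsometryEquiv rfl with hRRdef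
  have hRcoe : ((R.toLinearEquiv : V →ₗ[ℝ] V) : V →ₗ[ℝ] V) = Rlin := by
    apply LinearMap.ext
    intro x
    show R x = Rlin x
    rw [hRRdef]
    rw [li.coe_toLinearIsometryEquiv rfl]
    rfl
  refine ⟨R, ⟨?_, ?_⟩, ?_⟩
  · rw [hRcoe, ← LinearMap.det_toMatrix b.toBasis, hRmat]
    exact hdetP
  · rw [hRcoe]
    apply (LinearMap.toMatrix b.toBasis b.toBasis).injective
    rw [LinearMap.toMatrix_comp _ b.toBasis, ← hMdef, hRmat, ← hNdef]
    exact hNMP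
  · intro R' ⟨_, hR'⟩
    have hR : B = A ∘ₗ (R.toLinearEquiv : V →ₗ[ℝ] V) := by
      rw [hRcoe]
      apply (LinearMap.toMatrix b.toBasis b.toBasis).injective
      rw [LinearMap.toMatrix_comp _ b.toBasis, ← hMdef, hRmat, ← hNdef]
      exact hNMP
    ext x
    have : A (R' x) = A (R x) := by
      have h1 := congrFun (congrArg (DFunLike.coe) hR'.symm) x
      have h2 := congrFun (congrArg (DFunLike.coe) hR.symm) x
      simp only [LinearMap.coe_comp, Function.comp_apply] at h1 h2
      rw [← h1] at h2
      exact h2.symm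
    exact hinjA this
end

section
/- Let V be a 2-dimensional real inner product space, A : V → V an invertible linear map, R a linear isometry of V with det R = 1, and ψ, ψ̄ : V → ℝ linear functionals satisfying ψ(X)·A(Y) − ψ(Y)·A(X) = ψ̄(X)·A(R(Y)) − ψ̄(Y)·A(R(X)) for all X, Y ∈ V. Then ψ̄ = ψ ∘ R. -/
open scoped RealInnerProductSpace

/-- If `A` is invertible on a 2-dimensional real inner product space, `R` is a
rotation, and `ψ(X)·A(Y) − ψ(Y)·A(X) = ψ̄(X)·A(R Y) − ψ̄(Y)·A(R X)` for all
`X, Y`, then `ψ̄ = ψ ∘ R`. -/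
theorem connection_form_rotation
    {V : Type*} [NormedAddCommGroup V] [InnerProductSpace ℝ V]
    [FiniteDimensional ℝ V] (hdim : Module.finrank ℝ V = 2)
    (A : V →ₗ[ℝ] V) (hA : Function.Bijective A)
    (R : V ≃ₗᵢ[ℝ] V)
    (hR : LinearMap.det (R.toLinearEquiv : V →ₗ[ℝ] V) = 1)
    (ψ ψbar : V →ₗ[ℝ] ℝ)
    (h : ∀ X Y : V,
      ψ X • A Y - ψ Y • A X = ψbar X • A (R Y) - ψbar Y • A (R X)) :
    ∀ X : V, ψbar X = ψ (R X) := by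
  haveI : Fact (Module.finrank ℝ V = 2) := ⟨hdim⟩
  set o : Orientation ℝ V (Fin 2) :=
    ((stdOrthonormalBasis ℝ V).toBasis.reindex (finCongr hdim)).orientation with ho
  obtain ⟨θ, hθ⟩ := o.exists_linearIsometryEquiv_eq_of_det_pos (by rw [hR]; norm_num)
  -- cancel A
  have key : ∀ X Y : V, ψ X • Y - ψ Y • X = ψbar X • R Y - ψbar Y • R X := by
    intro X Y
    apply hA.injective
    simpa only [map_sub, map_smul] using h X Y
  intro X
  by_cases hX : X = 0
  · simp [hX]
  set J := o.rightAngleRotation with hJ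
  set c := Real.Angle.cos θ with hc
  set s := Real.Angle.sin θ with hs
  have hRX : R X = c • X + s • J X := by rw [hθ, Orientation.rotation_apply]
  have hRJX : R (J X) = c • J X - s • X := by
    rw [hθ, Orientation.rotation_apply, Orientation.rightAngleRotation_rightAngleRotation,
      smul_neg, ← sub_eq_add_neg]
  have E := key X (J X)
  rw [hRX, hRJX] at E
  have h1 := congrArg (fun v => ⟪v, X⟫) E
  have h2 := congrArg (fun v => ⟪v, J X⟫) E
  simp only [inner_sub_left, inner_add_left, real_inner_smul_left, smul_sub, smul_add,
    smul_smul, Orientation.inner_rightAngleRotation_self,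
    Orientation.inner_comp_rightAngleRotation] at h1 h2
  have e1 : ⟪J X, X⟫ = 0 := o.inner_rightAngleRotation_self X
  have e2 : ⟪J X, J X⟫ = ⟪X, X⟫ := o.inner_comp_rightAngleRotation X X
  have hJXX : ⟪X, J X⟫ = 0 := by rw [real_inner_comm]; exact e1
  simp only [e1, e2, hJXX] at h1 h2
  have hn : ⟪X, X⟫ ≠ 0 := inner_self_ne_zero.mpr hX
  have pyth : c ^ 2 + s ^ 2 = 1 := θ.cos_sq_add_sin_sq
  have goal2 : ψbar X = c * ψ X + s * ψ (J X) := by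
    have gm : ψbar X * ⟪X, X⟫ = (c * ψ X + s * ψ (J X)) * ⟪X, X⟫ := by
      linear_combination s * h1 - c * h2 - (ψbar X * ⟪X, X⟫) * pyth
    exact mul_right_cancel₀ hn gm
  rw [goal2, hRX]
  simp [mul_comm]
end

section
/- Let ρ > 1 be a real number and set φ = √(ρ² − 1)/ρ. Let p, q, γ be real numbers and put p̄ = cos γ · p + sin γ · q and q̄ = −sin γ · p + cos γ · q. Consider the 2×2 real matrices A = ρ·[[φ·p, q],[q, −p/φ]], B = ρ·[[φ·p̄, q̄],[q̄, −p̄/φ]] and J = [[0, −1/φ],[φ, 0]]. Then J² = −I and B = A·(cos γ · I + sin γ · J). (This is the relation between the shape operators of the two isometric hypersurface extensions, showing they are related by an elliptic tensor J with J² = −I.) -/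
/-- The shape operators of the two isometric hypersurface extensions are
related by an elliptic tensor `J` with `J² = −I`. -/
theorem elliptic_relation
    (ρ : ℝ) (hρ : 1 < ρ) (φ : ℝ) (hφ : φ = Real.sqrt (ρ ^ 2 - 1) / ρ)
    (p q γ pbar qbar : ℝ)
    (hp : pbar = Real.cos γ * p + Real.sin γ * q)
    (hq : qbar = -Real.sin γ * p + Real.cos γ * q)
    (A B J : Matrix (Fin 2) (Fin 2) ℝ)
    (hA : A = ρ • !![φ * p, q; q, -p / φ])
    (hB : B = ρ • !![φ * pbar, qbar; qbar, -pbar / φ])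
    (hJ : J = !![0, -1 / φ; φ, 0]) :
    J * J = -1 ∧ B = A * (Real.cos γ • (1 : Matrix (Fin 2) (Fin 2) ℝ)
      + Real.sin γ • J) := by
  have hρ0 : (0:ℝ) < ρ := lt_trans one_pos hρ
  have hs : (0:ℝ) < Real.sqrt (ρ ^ 2 - 1) := by
    apply Real.sqrt_pos.2
    nlinarith
  have hφ0 : φ ≠ 0 := by
    rw [hφ]
    positivity
  subst hA hB hJ hp hq
  constructor
  · ext i j
    fin_cases i <;> fin_cases j <;>
      simp [Matrix.mul_apply, Fin.sum_univ_two, Matrix.one_apply] <;>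
      field_simp
  · ext i j
    fin_cases i <;> fin_cases j <;>
      simp [Matrix.mul_apply, Fin.sum_univ_two, Matrix.one_apply,
        Matrix.smul_apply] <;> (try field_simp) <;> ring
end

section
/- Let V be an n-dimensional real inner product space and let A, B be symmetric linear endomorphisms of V with A² = B², A ≠ B, A ≠ −B, and with common kernel Δ = ker A = ker B of dimension n − 2 (so A and B have rank 2). Let ψ, ψ̄ : V → ℝ be nonzero linear functionals with ker ψ ≠ ker ψ̄ satisfying ψ(X)·A(Y) − ψ(Y)·A(X) = ψ̄(X)·B(Y) − ψ̄(Y)·B(X) for all X, Y ∈ V. Then Δ = ker ψ ∩ ker ψ̄. -/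
/-!
Putting `X ∈ Δ` into the identity gives `ψ(X)·A = ψ̄(X)·B`. Symmetric maps `A ≠ ±B` with
`A² = B²` are linearly independent: `A = tB` forces `(t² - 1)·B² = 0`, and `B² ≠ 0` because a
symmetric map with vanishing square vanishes. Hence `ψ(X) = ψ̄(X) = 0`. Conversely, for `X` in
`ker ψ ∩ ker ψ̄` the identity reads `ψ(Y)·AX = ψ̄(Y)·BX`; if `AX ≠ 0` then also `BX ≠ 0`, and then
`ψ` and `ψ̄` would have the same kernel.
-/

open scoped RealInnerProductSpace

namespace LinearMap.IsSymmetric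

variable {𝕜 E : Type*} [RCLike 𝕜] [NormedAddCommGroup E] [InnerProductSpace 𝕜 E]

theorem eq_zero_of_comp_self_eq_zero {T : E →ₗ[𝕜] E} (hT : T.IsSymmetric) (h : T ∘ₗ T = 0) :
    T = 0 := by
  ext x
  have : inner 𝕜 (T x) (T x) = 0 := by
    rw [hT, ← comp_apply, h, zero_apply, inner_zero_right]
  exact inner_self_eq_zero.mp this

theorem smul_ne_of_comp_self_eq {A B : E →ₗ[𝕜] E} (hB : B.IsSymmetric)
    (hsq : A ∘ₗ A = B ∘ₗ B) (hAB : A ≠ B) (hAB' : A ≠ -B) (t : 𝕜) : t • B ≠ A := by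
  rintro rfl
  have hB0 : B ≠ 0 := by
    rintro rfl
    exact hAB (by simp)
  have hBB : B ∘ₗ B ≠ 0 := fun h => hB0 (hB.eq_zero_of_comp_self_eq_zero h)
  have ht : (t * t - 1) • (B ∘ₗ B) = 0 := by
    rw [sub_smul, one_smul, ← smul_smul, ← comp_smul, ← smul_comp, hsq, sub_self]
  have ht : t * t = 1 := sub_eq_zero.mp ((smul_eq_zero.mp ht).resolve_right hBB)
  rcases mul_self_eq_one_iff.mp ht with rfl | rfl
  · exact hAB (one_smul _ _)
  · exact hAB' (neg_one_smul _ _)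

theorem linearIndependent_of_comp_self_eq {A B : E →ₗ[𝕜] E} (hA : A.IsSymmetric)
    (hB : B.IsSymmetric) (hsq : A ∘ₗ A = B ∘ₗ B) (hAB : A ≠ B) (hAB' : A ≠ -B) :
    LinearIndependent 𝕜 ![B, A] := by
  have hB0 : B ≠ 0 := by
    rintro rfl
    exact hAB (hA.eq_zero_of_comp_self_eq_zero (by simpa using hsq))
  exact (LinearIndependent.pair_iff' hB0).mpr (smul_ne_of_comp_self_eq hB hsq hAB hAB')

end LinearMap.IsSymmetric

theorem codazzi_kernel_intersection_general
    {V : Type*} [NormedAddCommGroup V] [InnerProductSpace ℝ V]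
    (A B : V →ₗ[ℝ] V)
    (hA : ∀ X Y : V, ⟪A X, Y⟫ = ⟪X, A Y⟫)
    (hB : ∀ X Y : V, ⟪B X, Y⟫ = ⟪X, B Y⟫)
    (hsq : A ∘ₗ A = B ∘ₗ B)
    (hAB : A ≠ B) (hAB' : A ≠ -B)
    (hker : LinearMap.ker A = LinearMap.ker B)
    (ψ ψbar : V →ₗ[ℝ] ℝ)
    (hkers : LinearMap.ker ψ ≠ LinearMap.ker ψbar)
    (h : ∀ X Y : V,
      ψ X • A Y - ψ Y • A X = ψbar X • B Y - ψbar Y • B X) :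
    LinearMap.ker A = LinearMap.ker ψ ⊓ LinearMap.ker ψbar := by
  have hker_iff {x : V} : A x = 0 ↔ B x = 0 := by
    simpa only [LinearMap.mem_ker] using SetLike.ext_iff.mp hker x
  apply le_antisymm
  · intro x (hx : A x = 0)
    have hrel : ψbar x • B + (-ψ x) • A = 0 := by
      ext Y
      have hxY := h x Y
      simp only [hx, hker_iff.mp hx, smul_zero, sub_zero] at hxY
      simp [hxY]
    obtain ⟨hψbar, hψ⟩ := LinearIndependent.pair_iff.mp
      (LinearMap.IsSymmetric.linearIndependent_of_comp_self_eq hA hB hsq hAB hAB') _ _ hrel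
    exact ⟨neg_eq_zero.mp hψ, hψbar⟩
  · rintro x ⟨hψ : ψ x = 0, hψbar : ψbar x = 0⟩
    have key (y : V) : ψ y • A x = ψbar y • B x := by
      simpa [hψ, hψbar] using h x y
    rw [LinearMap.mem_ker]
    by_contra hAx
    have hBx : B x ≠ 0 := mt hker_iff.mpr hAx
    refine hkers (SetLike.ext fun y => ?_)
    simp only [LinearMap.mem_ker]
    constructor
    · intro hy
      simpa [hy, hBx] using (key y).symm
    · intro hy
      simpa [hy, hAx] using key y

/-- Algebraic content of the Codazzi equation: if `A ≠ ±B` are symmetric with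
`A² = B²` and common kernel `Δ` of dimension `n − 2`, and nonzero functionals
`ψ ≠ ψ̄` (with different kernels) satisfy
`ψ(X)·A(Y) − ψ(Y)·A(X) = ψ̄(X)·B(Y) − ψ̄(Y)·B(X)`, then
`Δ = ker ψ ∩ ker ψ̄`. -/
theorem codazzi_kernel_intersection
    {V : Type*} [NormedAddCommGroup V] [InnerProductSpace ℝ V]
    [FiniteDimensional ℝ V]
    {n : ℕ} (hn : Module.finrank ℝ V = n)
    (A B : V →ₗ[ℝ] V)
    (hA : ∀ X Y : V, ⟪A X, Y⟫ = ⟪X, A Y⟫)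
    (hB : ∀ X Y : V, ⟪B X, Y⟫ = ⟪X, B Y⟫)
    (hsq : A ∘ₗ A = B ∘ₗ B)
    (hAB : A ≠ B) (hAB' : A ≠ -B)
    (hker : LinearMap.ker A = LinearMap.ker B)
    (hdimker : Module.finrank ℝ ↥(LinearMap.ker A) = n - 2)
    (hrkA : Module.finrank ℝ ↥(LinearMap.range A) = 2)
    (hrkB : Module.finrank ℝ ↥(LinearMap.range B) = 2)
    (ψ ψbar : V →ₗ[ℝ] ℝ) (hψ : ψ ≠ 0) (hψbar : ψbar ≠ 0)
    (hkers : LinearMap.ker ψ ≠ LinearMap.ker ψbar)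
    (h : ∀ X Y : V,
      ψ X • A Y - ψ Y • A X = ψbar X • B Y - ψbar Y • B X) :
    LinearMap.ker A = LinearMap.ker ψ ⊓ LinearMap.ker ψbar :=
  codazzi_kernel_intersection_general A B hA hB hsq hAB hAB' hker ψ ψbar hkers h
end
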